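/- arXiv:0705.1423 — 4 statements merged into one kernel-verified Lean document; each statement's English description precedes it below -/
import Mathlib

section
/- Let q be a power of an odd prime p, let 𝔽_q be the finite field with q elements, let K be an algebraic closure of 𝔽_q, and let σ : K → K be the Frobenius map σ(x) = x^q. Let λ ∈ 𝔽_q^× have multiplicative order m > 1, and let n be a positive integer. Then the number of n-element subsets S ⊆ K \ {0} with σ(S) = S and λ·S = S equals the number of (n/m)-element subsets T ⊆ K \ {0} with σ(T) = T if m divides n, and equals 0 otherwise. Moreover, when m divides n, the number of such S containing at least one element of 𝔽_q^× equals the number of (n/m)-element subsets T ⊆ K \ {0} with σ(T) = T containing at least one element of the set {a^m : a ∈ 𝔽_q^×} of m-th powers in 𝔽_q^× (a set of (q−1)/m elements). -/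
/-!
Since `λ` is a primitive `m`-th root of unity, a `λ`-stable finite set `S ⊆ K×` is the union of
the fibres of `x ↦ x ^ m` over its image `S ^ m`, each fibre having exactly `m` elements. As `K` is
algebraically closed, `S ↦ S ^ m` is therefore a bijection from the `λ`-stable finite subsets of
`K×` onto all finite subsets of `K×`, dividing cardinalities by `m`. The Frobenius is injective
and commutes with `x ↦ x ^ m`, so `σ(S) = S` if and only if `σ(S ^ m) = S ^ m`; and `a ∈ S` if and
only if `a ^ m ∈ S ^ m`.
-/

open Finset Polynomial Pointwise

theorem Set.BijOn.ncard_inter_preimage {α β : Type*} {f : α → β} {s : Set α} {t : Set β}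
    (h : Set.BijOn f s t) (u : Set β) : (s ∩ f ⁻¹' u).ncard = (t ∩ u).ncard := by
  rw [← h.image_eq, ← Set.image_inter_preimage, (h.injOn.mono Set.inter_subset_left).ncard_image]

theorem IsPrimitiveRoot.card_nthRootsFinset_pow {K : Type*} [Field K] [DecidableEq K]
    {l : K} {m : ℕ} (hl : IsPrimitiveRoot l m) {x : K} (hx : x ≠ 0) :
    #(nthRootsFinset m (x ^ m)) = m := by
  rw [nthRootsFinset_def, Multiset.toFinset_card_of_nodup (hl.nthRoots_nodup (pow_ne_zero m hx)),
    hl.card_nthRoots, if_pos ⟨x, rfl⟩]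

namespace Finset

variable {K : Type*} [Field K] [DecidableEq K] {m : ℕ} {l : K} {S T : Finset K}

noncomputable def powPreimage (m : ℕ) (T : Finset K) : Finset K :=
  T.biUnion fun y => nthRootsFinset m y

theorem mem_powPreimage (hm : 0 < m) {x : K} : x ∈ T.powPreimage m ↔ x ^ m ∈ T := by
  simp [powPreimage, mem_nthRootsFinset hm]

theorem zero_notMem_powPreimage (hm : 0 < m) (h0 : 0 ∉ T) : 0 ∉ T.powPreimage m := by
  rwa [mem_powPreimage hm, zero_pow hm.ne']

theorem zero_notMem_image_pow (h0 : 0 ∉ S) : 0 ∉ S.image (· ^ m) := by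
  simp only [mem_image, not_exists, not_and]
  exact fun x hx hx0 => h0 (eq_zero_of_pow_eq_zero hx0 ▸ hx)

theorem image_pow_powPreimage [IsAlgClosed K] (hm : 0 < m) :
    (T.powPreimage m).image (· ^ m) = T := by
  ext y
  simp only [mem_image, mem_powPreimage hm]
  refine ⟨fun ⟨x, hx, hxy⟩ => hxy ▸ hx, fun hy => ?_⟩
  obtain ⟨x, rfl⟩ := IsAlgClosed.exists_pow_nat_eq y hm
  exact ⟨x, hy, rfl⟩

theorem smul_powPreimage (hm : 0 < m) (hl : IsPrimitiveRoot l m) :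
    l • T.powPreimage m = T.powPreimage m := by
  ext x
  simp only [mem_smul_finset, mem_powPreimage hm, smul_eq_mul]
  refine ⟨fun ⟨y, hy, hyx⟩ => ?_, fun hx => ⟨l⁻¹ * x, ?_, ?_⟩⟩
  · rwa [← hyx, mul_pow, hl.pow_eq_one, one_mul]
  · rwa [mul_pow, inv_pow, hl.pow_eq_one, inv_one, one_mul]
  · exact mul_inv_cancel_left₀ (hl.ne_zero hm.ne') x

theorem pow_smul_eq_self (h : l • S = S) (i : ℕ) : l ^ i • S = S :=
  MulAction.mem_stabilizerSubmonoid_iff.1 (pow_mem (MulAction.mem_stabilizerSubmonoid_iff.2 h) i)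

theorem powPreimage_image_pow (hm : 0 < m) (hl : IsPrimitiveRoot l m) (hS : l • S = S) :
    (S.image (· ^ m)).powPreimage m = S := by
  ext x
  rw [mem_powPreimage hm]
  refine ⟨fun hx => ?_, mem_image_of_mem _⟩
  obtain ⟨s, hs, hsx⟩ := mem_image.1 hx
  have hx : x ∈ nthRoots m (s ^ m) := (mem_nthRoots hm).2 hsx.symm
  obtain ⟨i, -, rfl⟩ := Multiset.mem_map.1 ((hl.nthRoots_eq rfl) ▸ hx)
  rw [← pow_smul_eq_self hS i]
  exact smul_mem_smul_finset hs

theorem mem_iff_pow_mem_image_pow (hm : 0 < m) (hl : IsPrimitiveRoot l m) (hS : l • S = S)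
    {x : K} : x ∈ S ↔ x ^ m ∈ S.image (· ^ m) := by
  rw [← mem_powPreimage hm, powPreimage_image_pow hm hl hS]

theorem card_powPreimage (hm : 0 < m) (hl : IsPrimitiveRoot l m) (h0 : 0 ∉ T)
    (hT : ∀ y ∈ T, ∃ x, x ^ m = y) : #(T.powPreimage m) = m * #T := by
  rw [powPreimage, card_biUnion, sum_const_nat, mul_comm]
  · intro y hy
    obtain ⟨x, rfl⟩ := hT y hy
    exact hl.card_nthRootsFinset_pow fun hx => h0 (by rwa [hx, zero_pow hm.ne'] at hy)
  · intro y₁ _ y₂ _ hne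
    refine disjoint_left.2 fun x h₁ h₂ => hne ?_
    rw [mem_nthRootsFinset hm] at h₁ h₂
    exact h₁.symm.trans h₂

theorem card_eq_mul_card_image_pow (hm : 0 < m) (hl : IsPrimitiveRoot l m) (h0 : 0 ∉ S)
    (hS : l • S = S) : #S = m * #(S.image (· ^ m)) := by
  conv_lhs => rw [← powPreimage_image_pow hm hl hS]
  refine card_powPreimage hm hl (zero_notMem_image_pow h0) fun y hy => ?_
  obtain ⟨x, -, rfl⟩ := mem_image.1 hy
  exact ⟨x, rfl⟩

theorem image_eq_self_iff_image_pow (hm : 0 < m) (hl : IsPrimitiveRoot l m) (hS : l • S = S)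
    {f : K → K} (hf : Function.Injective f) (hfm : Function.Commute f (· ^ m)) :
    S.image f = S ↔ (S.image (· ^ m)).image f = S.image (· ^ m) := by
  refine ⟨fun h => by rw [image_image, hfm.comp_eq, ← image_image, h], fun h => ?_⟩
  refine eq_of_subset_of_card_le (image_subset_iff.2 fun x hx => ?_)
    (card_image_of_injective S hf).ge
  have hfx : f (x ^ m) = f x ^ m := hfm x
  rw [mem_iff_pow_mem_image_pow hm hl hS, ← hfx, ← h]
  exact mem_image_of_mem f (mem_image_of_mem _ hx)

theorem bijOn_image_pow [IsAlgClosed K] (hm : 0 < m) (hl : IsPrimitiveRoot l m) :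
    Set.BijOn (·.image (· ^ m)) {S : Finset K | 0 ∉ S ∧ l • S = S} {T | 0 ∉ T} where
  left := fun _ hS => zero_notMem_image_pow hS.1
  right.left := fun S₁ h₁ S₂ h₂ h => by
    rw [← powPreimage_image_pow hm hl h₁.2, ← powPreimage_image_pow hm hl h₂.2]
    exact congrArg (powPreimage m) h
  right.right := fun T hT =>
    ⟨T.powPreimage m, ⟨zero_notMem_powPreimage hm hT, smul_powPreimage hm hl⟩,
      image_pow_powPreimage hm⟩

theorem ncard_setOf_smul_eq_self [IsAlgClosed K] (hm : 0 < m) (hl : IsPrimitiveRoot l m)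
    {P Q : Finset K → Prop} (hPQ : ∀ S, 0 ∉ S → l • S = S → (P S ↔ Q (S.image (· ^ m)))) :
    {S | 0 ∉ S ∧ l • S = S ∧ P S}.ncard = {T | 0 ∉ T ∧ Q T}.ncard := by
  convert (bijOn_image_pow hm hl).ncard_inter_preimage {T | Q T} using 2
  · ext S
    simp only [Set.mem_ofPred_eq, Set.mem_inter_iff, Set.mem_preimage, and_assoc]
    exact and_congr_right fun h0 => and_congr_right fun hS => hPQ S h0 hS
  · rfl

theorem ncard_setOf_card_eq_smul_eq_self [IsAlgClosed K] (hm : 0 < m) (hl : IsPrimitiveRoot l m)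
    {f : K → K} (hf : Function.Injective f) (hfm : Function.Commute f (· ^ m)) (n : ℕ)
    {P Q : Finset K → Prop} (hPQ : ∀ S, 0 ∉ S → l • S = S → (P S ↔ Q (S.image (· ^ m)))) :
    {S : Finset K | #S = n ∧ 0 ∉ S ∧ S.image f = S ∧ S.image (l * ·) = S ∧ P S}.ncard =
      {T : Finset K | m * #T = n ∧ 0 ∉ T ∧ T.image f = T ∧ Q T}.ncard :=
  calc _ = {S : Finset K | 0 ∉ S ∧ l • S = S ∧ (#S = n ∧ S.image f = S ∧ P S)}.ncard := by
        congr 1; ext S; simp only [Set.mem_ofPred_eq]; tauto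
    _ = {T : Finset K | 0 ∉ T ∧ (m * #T = n ∧ T.image f = T ∧ Q T)}.ncard :=
        ncard_setOf_smul_eq_self hm hl fun S h0 hS => by
          rw [card_eq_mul_card_image_pow hm hl h0 hS, image_eq_self_iff_image_pow hm hl hS hf hfm,
            hPQ S h0 hS]
    _ = _ := by congr 1; ext T; simp only [Set.mem_ofPred_eq]; tauto

end Finset

theorem stmt3_general (q : ℕ)
    (F K : Type*) [Field F] [Fintype F] (hF : Fintype.card F = q)
    [Field K] [DecidableEq K] [Algebra F K] [IsAlgClosure F K]
    (lam : F) (m : ℕ) (hm : 1 < m) (hord : orderOf lam = m)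
    (n : ℕ) :
    ({S : Finset K | S.card = n ∧ (0 : K) ∉ S ∧ S.image (fun x => x ^ q) = S ∧
          S.image (fun x => algebraMap F K lam * x) = S}.ncard
        = if m ∣ n then
            {T : Finset K | T.card = n / m ∧ (0 : K) ∉ T ∧
              T.image (fun x => x ^ q) = T}.ncard
          else 0)
    ∧ (m ∣ n →
        {S : Finset K | S.card = n ∧ (0 : K) ∉ S ∧ S.image (fun x => x ^ q) = S ∧
            S.image (fun x => algebraMap F K lam * x) = S ∧
            ∃ a : F, a ≠ 0 ∧ algebraMap F K a ∈ S}.ncard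
          = {T : Finset K | T.card = n / m ∧ (0 : K) ∉ T ∧
              T.image (fun x => x ^ q) = T ∧
              ∃ a : F, a ≠ 0 ∧ algebraMap F K (a ^ m) ∈ T}.ncard) := by
  have : IsAlgClosed K := IsAlgClosure.isAlgClosed F
  have hm0 : 0 < m := by omega
  have hl : IsPrimitiveRoot (algebraMap F K lam) m :=
    (hord ▸ IsPrimitiveRoot.orderOf lam).map_of_injective (algebraMap F K).injective
  have hfrob : Function.Injective fun x : K => x ^ q :=
    hF ▸ (FiniteField.frobeniusAlgHom F K).injective
  have hfrob_pow : Function.Commute (fun x : K => x ^ q) (· ^ m) := fun x => pow_right_comm x m q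
  have hcard_iff (k : ℕ) (T : Finset K) : m * #T = m * k ↔ #T = k := mul_right_inj' hm0.ne'
  refine ⟨?_, fun ⟨k, hk⟩ => ?_⟩
  · have hcount := ncard_setOf_card_eq_smul_eq_self hm0 hl hfrob hfrob_pow n
      (P := fun _ => True) (Q := fun _ => True) fun _ _ _ => Iff.rfl
    simp only [and_true] at hcount
    rw [hcount]
    split_ifs with hdvd
    · obtain ⟨k, rfl⟩ := hdvd
      simp only [Nat.mul_div_cancel_left k hm0, hcard_iff]
    · convert Set.ncard_empty (Finset K)
      exact Set.eq_empty_of_forall_notMem fun T hT => hdvd ⟨_, hT.1.symm⟩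
  · subst hk
    rw [Nat.mul_div_cancel_left k hm0,
      ncard_setOf_card_eq_smul_eq_self hm0 hl hfrob hfrob_pow _
        (Q := fun T => ∃ a : F, a ≠ 0 ∧ algebraMap F K (a ^ m) ∈ T) fun S _ hS => ?_]
    · simp only [hcard_iff]
    · simp only [map_pow, ← mem_iff_pow_mem_image_pow hm0 hl hS]

/-- Let `q` be a power of an odd prime `p`, `𝔽_q` the field with `q`
elements, `K` an algebraic closure and `σ(x) = x^q` the Frobenius. Let `λ ∈ 𝔽_q^×` have
multiplicative order `m > 1` and let `n` be a positive integer. Then the number of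
`n`-element subsets `S ⊆ K \ {0}` with `σ(S) = S` and `λ·S = S` equals the number of
`(n/m)`-element subsets `T ⊆ K \ {0}` with `σ(T) = T` if `m ∣ n`, and `0` otherwise.
Moreover, when `m ∣ n`, the number of such `S` meeting `𝔽_q^×` equals the number of such
`T` meeting the set of `m`-th powers in `𝔽_q^×`. -/
theorem stmt3 (p e q : ℕ) (hp : p.Prime) (hodd : Odd p) (he : 0 < e) (hq : q = p ^ e)
    (F K : Type*) [Field F] [Fintype F] (hF : Fintype.card F = q)
    [Field K] [DecidableEq K] [Algebra F K] [IsAlgClosure F K]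
    (lam : F) (hlam : lam ≠ 0) (m : ℕ) (hm : 1 < m) (hord : orderOf lam = m)
    (n : ℕ) (hn : 0 < n) :
    ({S : Finset K | S.card = n ∧ (0 : K) ∉ S ∧ S.image (fun x => x ^ q) = S ∧
          S.image (fun x => algebraMap F K lam * x) = S}.ncard
        = if m ∣ n then
            {T : Finset K | T.card = n / m ∧ (0 : K) ∉ T ∧
              T.image (fun x => x ^ q) = T}.ncard
          else 0)
    ∧ (m ∣ n →
        {S : Finset K | S.card = n ∧ (0 : K) ∉ S ∧ S.image (fun x => x ^ q) = S ∧
            S.image (fun x => algebraMap F K lam * x) = S ∧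
            ∃ a : F, a ≠ 0 ∧ algebraMap F K a ∈ S}.ncard
          = {T : Finset K | T.card = n / m ∧ (0 : K) ∉ T ∧
              T.image (fun x => x ^ q) = T ∧
              ∃ a : F, a ≠ 0 ∧ algebraMap F K (a ^ m) ∈ T}.ncard) :=
  stmt3_general q F K hF lam m hm hord n
end

section
/- Let q be a power of an odd prime p, let 𝔽_q be the finite field with q elements, let K be an algebraic closure of 𝔽_q, and let σ : K → K be the Frobenius map σ(x) = x^q. Let n be a positive integer. Then the number of n-element subsets S ⊆ K with σ(S) = S and S + 1 = S equals the number of (n/p)-element subsets T ⊆ K with σ(T) = T if p divides n, and equals 0 otherwise. Moreover, when p divides n, the number of such S containing at least one element of 𝔽_q equals the number of (n/p)-element subsets T ⊆ K with σ(T) = T containing at least one element of the set {a^p − a : a ∈ 𝔽_q} (a set of q/p elements). -/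
set_option linter.unusedSectionVars false
open Polynomial Finset

section AS

variable {K : Type*} [Field K] [DecidableEq K] [IsAlgClosed K] (p : ℕ) [Fact p.Prime]
  [CharP K p]

lemma as_natDegree (y : K) : ((X : K[X]) ^ p - (X + C y)).natDegree = p := by
  have hp2 : 1 < p := (Fact.out : p.Prime).one_lt
  rw [natDegree_sub_eq_left_of_natDegree_lt, natDegree_X_pow]
  rw [natDegree_X_pow, natDegree_X_add_C]
  exact hp2

lemma as_ne_zero (y : K) : ((X : K[X]) ^ p - (X + C y)) ≠ 0 := by
  intro h
  have hp2 : 1 < p := (Fact.out : p.Prime).one_lt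
  have := as_natDegree p y
  rw [h, natDegree_zero] at this
  omega

lemma as_exists (y : K) : ∃ x : K, x ^ p - x = y := by
  have hp2 : 1 < p := (Fact.out : p.Prime).one_lt
  have hdeg : ((X : K[X]) ^ p - (X + C y)).degree ≠ 0 := by
    intro h
    have h0 : ((X : K[X]) ^ p - (X + C y)).natDegree = 0 :=
      natDegree_eq_zero_iff_degree_le_zero.mpr h.le
    rw [as_natDegree] at h0
    omega
  obtain ⟨x, hx⟩ := IsAlgClosed.exists_root _ hdeg
  refine ⟨x, ?_⟩
  have h0 : x ^ p - (x + y) = 0 := by simpa [IsRoot] using hx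
  have h1 : x ^ p = x + y := by rwa [sub_eq_zero] at h0
  rw [h1]; ring

noncomputable def asSec (y : K) : K := Classical.choose (as_exists p y)

lemma asSec_spec (y : K) : (asSec p y) ^ p - asSec p y = y :=
  Classical.choose_spec (as_exists p y)

def asKer : Finset K := (Finset.range p).image ((↑) : ℕ → K)

lemma natCast_pow_p (m : ℕ) : ((m : K)) ^ p = (m : K) :=
  map_natCast (frobenius K p) m

lemma asKer_card : (asKer (K := K) p).card = p := by
  rw [asKer, Finset.card_image_of_injOn, Finset.card_range]
  intro i hi j hj hij
  exact CharP.natCast_injOn_Iio K p (by simpa using hi) (by simpa using hj) hij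

lemma mem_asKer_iff {z : K} : z ∈ asKer (K := K) p ↔ z ^ p = z := by
  have hfwd : ∀ w : K, w ∈ asKer (K := K) p → w ^ p = w := by
    intro w hw
    rw [asKer, Finset.mem_image] at hw
    obtain ⟨m, -, rfl⟩ := hw
    exact natCast_pow_p p m
  refine ⟨hfwd z, fun hz => ?_⟩
  set R : Finset K := ((X : K[X]) ^ p - (X + C 0)).roots.toFinset with hR
  have hmemR : ∀ w : K, w ∈ R ↔ w ^ p = w := by
    intro w
    rw [hR, Multiset.mem_toFinset, mem_roots (as_ne_zero p 0)]
    simp only [IsRoot, eval_sub, eval_pow, eval_X, eval_add, eval_C, add_zero]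
    exact sub_eq_zero
  have hsub : asKer (K := K) p ⊆ R := fun w hw => (hmemR w).mpr (hfwd w hw)
  have hcardR : R.card ≤ p := by
    have h1 : R.card ≤ Multiset.card (((X : K[X]) ^ p - (X + C 0)).roots) :=
      Multiset.toFinset_card_le _
    have h2 := Polynomial.card_roots' ((X : K[X]) ^ p - (X + C 0))
    have h3 := as_natDegree p (0 : K)
    omega
  have heq : asKer (K := K) p = R :=
    Finset.eq_of_subset_of_card_le hsub (by rw [asKer_card]; exact hcardR)
  rw [heq]
  exact (hmemR z).mpr hz

noncomputable def asFiber (y : K) : Finset K :=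
  (asKer (K := K) p).image (fun c => asSec p y + c)

lemma mem_asFiber {y x : K} : x ∈ asFiber p y ↔ x ^ p - x = y := by
  rw [asFiber, Finset.mem_image]
  constructor
  · rintro ⟨c, hc, rfl⟩
    have hc' : c ^ p = c := (mem_asKer_iff p).mp hc
    rw [add_pow_char, hc']
    linear_combination asSec_spec p y
  · intro hx
    refine ⟨x - asSec p y, ?_, by ring⟩
    rw [mem_asKer_iff, sub_pow_char]
    have h1 := asSec_spec p y
    linear_combination hx - h1

lemma asFiber_card (y : K) : (asFiber p y).card = p := by
  rw [asFiber, Finset.card_image_of_injective _ (add_right_injective _), asKer_card]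

noncomputable def asPsi (T : Finset K) : Finset K := T.biUnion (asFiber p)

lemma mem_asPsi {T : Finset K} {x : K} : x ∈ asPsi p T ↔ x ^ p - x ∈ T := by
  rw [asPsi, Finset.mem_biUnion]
  constructor
  · rintro ⟨y, hy, hx⟩
    rwa [(mem_asFiber p).mp hx]
  · intro hx
    exact ⟨x ^ p - x, hx, (mem_asFiber p).mpr rfl⟩

lemma asPsi_card (T : Finset K) : (asPsi p T).card = p * T.card := by
  rw [asPsi, Finset.card_biUnion]
  · rw [Finset.sum_congr rfl (fun y _ => asFiber_card p y), Finset.sum_const, smul_eq_mul,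
      mul_comm]
  · intro y _ y' _ hyy'
    refine Finset.disjoint_left.mpr fun x hx hx' => ?_
    exact hyy' (((mem_asFiber p).mp hx).symm.trans ((mem_asFiber p).mp hx'))

lemma asPsi_image (T : Finset K) : (asPsi p T).image (fun x => x ^ p - x) = T := by
  ext y
  rw [Finset.mem_image]
  constructor
  · rintro ⟨x, hx, rfl⟩
    exact (mem_asPsi p).mp hx
  · intro hy
    exact ⟨asSec p y, (mem_asPsi p).mpr (by rw [asSec_spec]; exact hy), asSec_spec p y⟩

lemma asPsi_injective : Function.Injective (asPsi p : Finset K → Finset K) := by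
  intro T T' h
  rw [← asPsi_image p T, ← asPsi_image p T', h]

lemma image_eq_self_iff {g : K → K} (hg : Function.Injective g) {S : Finset K} :
    S.image g = S ↔ ∀ x ∈ S, g x ∈ S := by
  constructor
  · intro h x hx
    rw [← h]
    exact Finset.mem_image_of_mem g hx
  · intro h
    apply Finset.eq_of_subset_of_card_le
    · intro y hy
      obtain ⟨x, hx, rfl⟩ := Finset.mem_image.mp hy
      exact h x hx
    · rw [Finset.card_image_of_injective _ hg]

end AS

/-- Let `q` be a power of an odd prime `p`, `𝔽_q` the field with `q`
elements, `K` an algebraic closure and `σ(x) = x^q` the Frobenius. Let `n` be a positive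
integer. Then the number of `n`-element subsets `S ⊆ K` with `σ(S) = S` and `S + 1 = S`
equals the number of `(n/p)`-element subsets `T ⊆ K` with `σ(T) = T` if `p ∣ n`, and `0`
otherwise. Moreover, when `p ∣ n`, the number of such `S` meeting `𝔽_q` equals the number
of such `T` meeting the set `{a^p − a : a ∈ 𝔽_q}`. -/
theorem stmt4 (p e q : ℕ) (hp : p.Prime) (hodd : Odd p) (he : 0 < e) (hq : q = p ^ e)
    (F K : Type*) [Field F] [Fintype F] (hF : Fintype.card F = q)
    [Field K] [DecidableEq K] [Algebra F K] [IsAlgClosure F K]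
    (n : ℕ) (hn : 0 < n) :
    ({S : Finset K | S.card = n ∧ S.image (fun x => x ^ q) = S ∧
          S.image (fun x => x + 1) = S}.ncard
        = if p ∣ n then
            {T : Finset K | T.card = n / p ∧ T.image (fun x => x ^ q) = T}.ncard
          else 0)
    ∧ (p ∣ n →
        {S : Finset K | S.card = n ∧ S.image (fun x => x ^ q) = S ∧
            S.image (fun x => x + 1) = S ∧
            ∃ a : F, algebraMap F K a ∈ S}.ncard
          = {T : Finset K | T.card = n / p ∧ T.image (fun x => x ^ q) = T ∧
              ∃ a : F, algebraMap F K (a ^ p - a) ∈ T}.ncard) := by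
  subst hq
  haveI : Fact p.Prime := ⟨hp⟩
  haveI : IsAlgClosed K := IsAlgClosure.isAlgClosed F
  obtain ⟨m, hr, hcardF⟩ := FiniteField.card F (ringChar F)
  have hrp : ringChar F = p := by
    have hpq : p ∣ Fintype.card F := by rw [hF]; exact dvd_pow_self p he.ne'
    rw [hcardF] at hpq
    exact ((Nat.prime_dvd_prime_iff_eq hp hr).mp (hp.dvd_of_dvd_pow hpq)).symm
  haveI : CharP F p := hrp ▸ ringChar.charP F
  haveI : CharP K p := charP_of_injective_algebraMap (algebraMap F K).injective p
  -- basic facts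
  have hcomm : ∀ x : K, (x ^ p ^ e) ^ p - x ^ p ^ e = (x ^ p - x) ^ p ^ e := by
    intro x
    have hxx : (x ^ p) ^ p ^ e = (x ^ p ^ e) ^ p := by
      rw [← pow_mul, ← pow_mul, mul_comm]
    rw [sub_pow_char_pow, hxx]
  have hinjσ : Function.Injective (fun x : K => x ^ p ^ e) := by
    intro a b hab
    have h0 : (a - b) ^ p ^ e = 0 := by
      rw [sub_pow_char_pow]
      simpa using sub_eq_zero.mpr hab
    have := pow_eq_zero_iff (n := p ^ e) (pow_pos hp.pos e).ne' |>.mp h0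
    exact sub_eq_zero.mp this
  have hinj1 : Function.Injective (fun x : K => x + 1) := fun a b hab => by
    simpa using hab
  have hone : ∀ x : K, (x + 1) ^ p - (x + 1) = x ^ p - x := by
    intro x
    rw [add_pow_char, one_pow]
    ring
  have hclosure : ∀ S : Finset K, (∀ x ∈ S, x + 1 ∈ S) →
      ∀ s ∈ S, ∀ c ∈ asKer (K := K) p, s + c ∈ S := by
    intro S hS
    have key : ∀ m : ℕ, ∀ s ∈ S, s + (m : K) ∈ S := by
      intro m
      induction m with
      | zero => intro s hs; simpa using hs
      | succ k ih =>
        intro s hs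
        have h1 := hS _ (ih s hs)
        push_cast
        rw [← add_assoc]
        exact h1
    intro s hs c hc
    rw [asKer, Finset.mem_image] at hc
    obtain ⟨k, -, rfl⟩ := hc
    exact key k s hs
  have hΨΦ : ∀ S : Finset K, (∀ x ∈ S, x + 1 ∈ S) →
      asPsi p (S.image (fun x => x ^ p - x)) = S := by
    intro S hS
    apply Finset.Subset.antisymm
    · intro x hx
      have hx' := (mem_asPsi p).mp hx
      obtain ⟨s, hs, hsx⟩ := Finset.mem_image.mp hx'
      have hker : x - s ∈ asKer (K := K) p := by
        rw [mem_asKer_iff, sub_pow_char]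
        linear_combination -hsx
      have := hclosure S hS s hs _ hker
      simpa using this
    · intro x hx
      exact (mem_asPsi p).mpr (Finset.mem_image_of_mem _ hx)
  have hcardΦ : ∀ S : Finset K, (∀ x ∈ S, x + 1 ∈ S) →
      (S.image (fun x => x ^ p - x)).card = S.card / p ∧ p ∣ S.card := by
    intro S hS
    have h1 := asPsi_card p (S.image (fun x => x ^ p - x))
    rw [hΨΦ S hS] at h1
    constructor
    · rw [h1, Nat.mul_div_cancel_left _ hp.pos]
    · exact ⟨_, h1⟩
  have hσΦ : ∀ S : Finset K, S.image (fun x => x ^ p ^ e) = S →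
      (S.image (fun x => x ^ p - x)).image (fun x => x ^ p ^ e)
        = S.image (fun x => x ^ p - x) := by
    intro S hσ
    rw [Finset.image_image]
    have hfun : ((fun x : K => x ^ p ^ e) ∘ fun x => x ^ p - x)
        = ((fun x : K => x ^ p - x) ∘ fun x => x ^ p ^ e) := by
      funext x
      exact (hcomm x).symm
    rw [hfun, ← Finset.image_image, hσ]
  have hΨmem : ∀ (T : Finset K), T.image (fun x => x ^ p ^ e) = T →
      (asPsi p T).image (fun x => x ^ p ^ e) = asPsi p T ∧
      (asPsi p T).image (fun x => x + 1) = asPsi p T := by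
    intro T hTσ
    constructor
    · rw [image_eq_self_iff hinjσ]
      intro x hx
      rw [mem_asPsi] at hx ⊢
      rw [hcomm x, ← hTσ]
      exact Finset.mem_image_of_mem _ hx
    · rw [image_eq_self_iff hinj1]
      intro x hx
      rw [mem_asPsi] at hx ⊢
      rw [hone x]
      exact hx
  constructor
  · by_cases hdvd : p ∣ n
    · rw [if_pos hdvd]
      have hset : {S : Finset K | S.card = n ∧ S.image (fun x => x ^ p ^ e) = S ∧
            S.image (fun x => x + 1) = S}
          = (asPsi p) '' {T : Finset K | T.card = n / p ∧
            T.image (fun x => x ^ p ^ e) = T} := by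
        ext S
        simp only [Set.mem_setOf_eq, Set.mem_image]
        constructor
        · rintro ⟨hcard, hσ, h1⟩
          have h1' : ∀ x ∈ S, x + 1 ∈ S := fun x hx => by
            rw [← h1]; exact Finset.mem_image_of_mem _ hx
          refine ⟨S.image (fun x => x ^ p - x), ⟨?_, hσΦ S hσ⟩, hΨΦ S h1'⟩
          rw [(hcardΦ S h1').1, hcard]
        · rintro ⟨T, ⟨hTcard, hTσ⟩, rfl⟩
          refine ⟨?_, (hΨmem T hTσ).1, (hΨmem T hTσ).2⟩
          rw [asPsi_card, hTcard, Nat.mul_div_cancel' hdvd]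
      rw [hset, Set.ncard_image_of_injective _ (asPsi_injective p)]
    · rw [if_neg hdvd]
      have hset : {S : Finset K | S.card = n ∧ S.image (fun x => x ^ p ^ e) = S ∧
            S.image (fun x => x + 1) = S} = ∅ := by
        ext S
        simp only [Set.mem_setOf_eq, Set.mem_empty_iff_false, iff_false, not_and]
        intro hcard hσ h1
        have h1' : ∀ x ∈ S, x + 1 ∈ S := fun x hx => by
          rw [← h1]; exact Finset.mem_image_of_mem _ hx
        exact absurd (hcard ▸ (hcardΦ S h1').2) hdvd
      rw [hset, Set.ncard_empty]
  · intro hdvd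
    have hset : {S : Finset K | S.card = n ∧ S.image (fun x => x ^ p ^ e) = S ∧
          S.image (fun x => x + 1) = S ∧ ∃ a : F, algebraMap F K a ∈ S}
        = (asPsi p) '' {T : Finset K | T.card = n / p ∧
          T.image (fun x => x ^ p ^ e) = T ∧
          ∃ a : F, algebraMap F K (a ^ p - a) ∈ T} := by
      ext S
      simp only [Set.mem_setOf_eq, Set.mem_image]
      constructor
      · rintro ⟨hcard, hσ, h1, a, ha⟩
        have h1' : ∀ x ∈ S, x + 1 ∈ S := fun x hx => by
          rw [← h1]; exact Finset.mem_image_of_mem _ hx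
        refine ⟨S.image (fun x => x ^ p - x), ⟨?_, hσΦ S hσ, a, ?_⟩, hΨΦ S h1'⟩
        · rw [(hcardΦ S h1').1, hcard]
        · refine Finset.mem_image.mpr ⟨algebraMap F K a, ha, ?_⟩
          rw [map_sub, map_pow]
      · rintro ⟨T, ⟨hTcard, hTσ, a, ha⟩, rfl⟩
        refine ⟨?_, (hΨmem T hTσ).1, (hΨmem T hTσ).2, a, ?_⟩
        · rw [asPsi_card, hTcard, Nat.mul_div_cancel' hdvd]
        · rw [mem_asPsi, ← map_pow, ← map_sub]
          exact ha
    rw [hset, Set.ncard_image_of_injective _ (asPsi_injective p)]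
end

section
/- Let q be a power of an odd prime p, let 𝔽_q be the finite field with q elements, let K be an algebraic closure of 𝔽_q, and let σ : K → K be the Frobenius map σ(x) = x^q. For every integer n ≥ 2, the number of n-element subsets S ⊆ K with σ(S) = S equals q^n − q^{n−1}; for n = 1 this number equals q. -/
/-!
A Frobenius-stable `n`-subset `S` of `K` is exactly the root set of a squarefree monic polynomial
of degree `n` over `F`: the coefficients of `∏ x ∈ S, (X - C x)` are fixed by `x ↦ x ^ q`, hence
lie in `F`. Writing every monic polynomial uniquely as `a * b ^ 2` with `a` squarefree and `a`, `b`
monic gives `q ^ n = ∑ₖ s (n - 2k) q ^ k`, where `s m` counts the squarefree monic polynomials of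
degree `m`. Comparing this identity for `n + 2` and for `n` yields
`s (n + 2) + q ^ (n + 1) = q ^ (n + 2)`.
-/

open Polynomial

theorem exists_squarefree_mul_sq {α : Type*} [CommMonoidWithZero α] [WfDvdMonoid α]
    {x : α} (hx : x ≠ 0) : ∃ a b : α, Squarefree a ∧ x = a * b ^ 2 := by
  induction x using (wellFounded_dvdNotUnit (α := α)).induction with
  | _ x ih =>
    by_cases hsq : Squarefree x
    · exact ⟨x, 1, hsq, by rw [one_pow, mul_one]⟩
    obtain ⟨y, ⟨z, rfl⟩, hy⟩ : ∃ y, y * y ∣ x ∧ ¬IsUnit y := by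
      simpa [Squarefree] using hsq
    have hz : z ≠ 0 := right_ne_zero_of_mul hx
    obtain ⟨a, b, ha, rfl⟩ := ih z ⟨hz, y * y, fun h => hy (isUnit_of_mul_isUnit_left h),
      mul_comm _ _⟩ hz
    exact ⟨a, y * b, ha, by rw [mul_pow, sq, sq]; ac_rfl⟩

theorem associated_of_squarefree_mul_sq_eq {α : Type*} [CommMonoidWithZero α]
    [GCDMonoid α] {a₁ a₂ b₁ b₂ : α} (ha₁ : Squarefree a₁) (ha₂ : Squarefree a₂)
    (h : a₁ * b₁ ^ 2 = a₂ * b₂ ^ 2) : Associated b₁ b₂ := by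
  obtain ⟨c₁, c₂, hb₁, hb₂, hc⟩ := extract_gcd b₁ b₂
  set d := gcd b₁ b₂
  by_cases hd : d = 0
  · rw [hb₁, hb₂, hd, zero_mul, zero_mul]
  have hcop : IsRelPrime (c₁ ^ 2) (c₂ ^ 2) :=
    (gcd_isUnit_iff_isRelPrime.mp hc).pow_left.pow_right
  have key : d ^ 2 * (a₁ * c₁ ^ 2) = d ^ 2 * (a₂ * c₂ ^ 2) := by
    rw [hb₁, hb₂, mul_pow, mul_pow] at h
    rw [mul_left_comm, h, mul_left_comm]
  replace key := mul_left_cancel₀ (pow_ne_zero 2 hd) key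
  have hu₁ : IsUnit c₁ := ha₂ c₁ (by
    rw [← sq]; exact hcop.dvd_of_dvd_mul_right (key ▸ dvd_mul_left _ _))
  have hu₂ : IsUnit c₂ := ha₁ c₂ (by
    rw [← sq]; exact hcop.symm.dvd_of_dvd_mul_right (key ▸ dvd_mul_left _ _))
  rw [hb₁, hb₂]
  exact ((associated_one_iff_isUnit.mpr hu₁).trans
    (associated_one_iff_isUnit.mpr hu₂).symm).mul_left d

namespace Polynomial

variable {F : Type*} [Field F]

theorem Monic.exists_squarefree_mul_sq {f : F[X]} (hf : f.Monic) :
    ∃ a b : F[X], a.Monic ∧ Squarefree a ∧ b.Monic ∧ f = a * b ^ 2 := by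
  classical
  obtain ⟨a, b, ha, rfl⟩ := _root_.exists_squarefree_mul_sq hf.ne_zero
  have hb : b ≠ 0 := by rintro rfl; simp at hf
  have hc : (normalize b).Monic := monic_normalize hb
  obtain ⟨u, hu⟩ := normalize_associated b
  generalize normalize b = c at hc hu
  subst hu
  have hau : Squarefree (a * ↑(u ^ 2)) :=
    (associated_mul_unit_right a _ (u ^ 2).isUnit).squarefree_iff.mp ha
  rw [show a * (c * ↑u) ^ 2 = a * ↑(u ^ 2) * c ^ 2 by push_cast; ring] at hf ⊢
  exact ⟨_, c, (hc.pow 2).of_mul_monic_right hf, hau, hc, rfl⟩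

theorem eq_of_monic_of_mul_sq_eq {a₁ a₂ b₁ b₂ : F[X]} (ha₁ : Squarefree a₁)
    (ha₂ : Squarefree a₂) (hb₁ : b₁.Monic) (hb₂ : b₂.Monic)
    (h : a₁ * b₁ ^ 2 = a₂ * b₂ ^ 2) : a₁ = a₂ ∧ b₁ = b₂ := by
  classical
  have hb : b₁ = b₂ := eq_of_monic_of_associated hb₁ hb₂
    (associated_of_squarefree_mul_sq_eq ha₁ ha₂ h)
  subst hb
  exact ⟨mul_right_cancel₀ (pow_ne_zero 2 hb₁.ne_zero) h, rfl⟩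

variable (F)

def monicOfDegree (n : ℕ) : Set F[X] := {f | f.Monic ∧ f.natDegree = n}

def squarefreeMonicOfDegree (n : ℕ) : Set F[X] := {f | f.Monic ∧ f.natDegree = n ∧ Squarefree f}

noncomputable def mulSq (n : ℕ) :
    (Σ k : Fin (n / 2 + 1), squarefreeMonicOfDegree F (n - 2 * k) × monicOfDegree F k) →
      monicOfDegree F n :=
  fun ⟨k, a, b⟩ => ⟨a * b ^ 2, a.2.1.mul (b.2.1.pow 2), by
    rw [a.2.1.natDegree_mul (b.2.1.pow 2), natDegree_pow, a.2.2.1, b.2.2]; omega⟩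

theorem mulSq_bijective (n : ℕ) : Function.Bijective (mulSq F n) := by
  constructor
  · rintro ⟨k₁, ⟨a₁, ha₁⟩, ⟨b₁, hb₁⟩⟩ ⟨k₂, ⟨a₂, ha₂⟩, ⟨b₂, hb₂⟩⟩ h
    obtain ⟨rfl, rfl⟩ := eq_of_monic_of_mul_sq_eq ha₁.2.2 ha₂.2.2 hb₁.1 hb₂.1
      (congrArg Subtype.val h)
    obtain rfl : k₁ = k₂ := Fin.ext (hb₁.2.symm.trans hb₂.2)
    rfl
  · rintro ⟨f, hf, rfl⟩
    obtain ⟨a, b, ha, ha', hb, rfl⟩ := hf.exists_squarefree_mul_sq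
    have hdeg : (a * b ^ 2).natDegree = a.natDegree + 2 * b.natDegree := by
      rw [ha.natDegree_mul (hb.pow 2), natDegree_pow, mul_comm]
    exact ⟨⟨⟨b.natDegree, by omega⟩, ⟨a, ha, by simp only; omega, ha'⟩, ⟨b, hb, rfl⟩⟩, rfl⟩

variable [Fintype F]

noncomputable def monicOfDegreeEquiv (n : ℕ) : monicOfDegree F n ≃ (Fin n → F) :=
  (monicEquivDegreeLT n).trans (degreeLTEquiv F n).toEquiv

instance (n : ℕ) : Finite (monicOfDegree F n) := .of_equiv _ (monicOfDegreeEquiv F n).symm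

instance (n : ℕ) : Finite (squarefreeMonicOfDegree F n) :=
  Finite.Set.subset (monicOfDegree F n) fun _ hf => ⟨hf.1, hf.2.1⟩

theorem card_monicOfDegree (n : ℕ) : Nat.card (monicOfDegree F n) = Fintype.card F ^ n := by
  simp [Nat.card_congr (monicOfDegreeEquiv F n)]

theorem card_pow_eq_sum_card_squarefreeMonicOfDegree (n : ℕ) :
    Fintype.card F ^ n = ∑ k ∈ Finset.range (n / 2 + 1),
      Nat.card (squarefreeMonicOfDegree F (n - 2 * k)) * Fintype.card F ^ k := by
  rw [← card_monicOfDegree, ← Nat.card_congr (Equiv.ofBijective _ (mulSq_bijective F n)),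
    Nat.card_sigma, ← Fin.sum_univ_eq_sum_range]
  simp only [Nat.card_prod, card_monicOfDegree]

theorem card_squarefreeMonicOfDegree_one :
    Nat.card (squarefreeMonicOfDegree F 1) = Fintype.card F := by
  simpa using (card_pow_eq_sum_card_squarefreeMonicOfDegree F 1).symm

theorem card_squarefreeMonicOfDegree_add_two (n : ℕ) :
    Nat.card (squarefreeMonicOfDegree F (n + 2)) + Fintype.card F ^ (n + 1) =
      Fintype.card F ^ (n + 2) := by
  rw [card_pow_eq_sum_card_squarefreeMonicOfDegree F (n + 2),
    show (n + 2) / 2 + 1 = n / 2 + 1 + 1 by omega, Finset.sum_range_succ',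
    pow_succ, card_pow_eq_sum_card_squarefreeMonicOfDegree F n, Finset.sum_mul]
  simp only [show ∀ k, n + 2 - 2 * (k + 1) = n - 2 * k by omega, pow_succ, mul_assoc, mul_zero,
    Nat.sub_zero, pow_zero, mul_one]
  exact add_comm _ _

end Polynomial

namespace FiniteField

variable {F K : Type*} [Field F] [Fintype F] [Field K] [Algebra F K]

theorem mem_range_algebraMap_of_pow_card_eq_self {x : K} (hx : x ^ Fintype.card F = x) :
    x ∈ (algebraMap F K).range := by
  have hq : 1 < Fintype.card F := Fintype.one_lt_card
  have hcard : Multiset.card (X ^ Fintype.card F - X : F[X]).roots =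
      (X ^ Fintype.card F - X : F[X]).natDegree := by
    rw [roots_X_pow_card_sub_X, X_pow_card_sub_X_natDegree_eq F hq]
    rfl
  have hroots : ((X ^ Fintype.card F - X : F[X]).map (algebraMap F K)).roots =
      Finset.univ.val.map (algebraMap F K) := by
    rw [← roots_map_of_injective_of_card_eq_natDegree (algebraMap F K).injective hcard,
      roots_X_pow_card_sub_X]
  have hx' : x ∈ ((X ^ Fintype.card F - X : F[X]).map (algebraMap F K)).roots := by
    rw [mem_roots (map_ne_zero (X_pow_card_sub_X_ne_zero F hq))]
    simp [hx]
  rw [hroots, Multiset.mem_map] at hx'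
  obtain ⟨a, -, rfl⟩ := hx'
  exact ⟨a, rfl⟩

theorem image_pow_card_aroots [DecidableEq K] (f : F[X]) :
    (f.aroots K).toFinset.image (· ^ Fintype.card F) = (f.aroots K).toFinset := by
  have hinj := (frobeniusAlgHom F K).toRingHom.injective
  refine Finset.eq_of_subset_of_card_le (fun y hy => ?_)
    (Finset.card_image_of_injective _ hinj).ge
  obtain ⟨x, hx, rfl⟩ := Finset.mem_image.mp hy
  have := rootSet_mapsTo (p := f) (frobeniusAlgHom F K) (by simpa [rootSet_def] using hx)
  simpa [rootSet_def] using this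

theorem exists_monic_map_eq_prod_X_sub_C [DecidableEq K] {S : Finset K}
    (hS : S.image (· ^ Fintype.card F) = S) :
    ∃ f : F[X], f.Monic ∧ f.map (algebraMap F K) = ∏ x ∈ S, (X - C x) := by
  have hinj : Function.Injective (· ^ Fintype.card F : K → K) :=
    (frobeniusAlgHom F K).toRingHom.injective
  have hfix : (∏ x ∈ S, (X - C x)).map (frobeniusAlgHom F K).toRingHom = ∏ x ∈ S, (X - C x) :=
    calc _ = ∏ x ∈ S, (X - C (x ^ Fintype.card F)) := by
          simp [Polynomial.map_prod]
      _ = ∏ y ∈ S.image (· ^ Fintype.card F), (X - C y) :=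
          (Finset.prod_image (f := fun y => X - C y) fun x _ y _ h => hinj h).symm
      _ = _ := by rw [hS]
  have hlifts : (∏ x ∈ S, (X - C x)) ∈ lifts (algebraMap F K) := by
    refine (lifts_iff_coeff_lifts _).mpr fun i => ?_
    exact mem_range_algebraMap_of_pow_card_eq_self (by simpa using congrArg (coeff · i) hfix)
  obtain ⟨f, hfg, -, hf⟩ := lifts_and_natDegree_eq_and_monic hlifts (monic_prod_X_sub_C _ S)
  exact ⟨f, hf, hfg⟩

variable [IsAlgClosed K] [DecidableEq K]

theorem map_eq_prod_aroots {f : F[X]} (hf : f.Monic) (hsq : Squarefree f) :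
    f.map (algebraMap F K) = ∏ x ∈ (f.aroots K).toFinset, (X - C x) := by
  have hnodup : (f.aroots K).Nodup :=
    nodup_roots (PerfectField.separable_iff_squarefree.mpr hsq).map
  rw [(IsAlgClosed.splits _).eq_prod_roots_of_monic (hf.map _), Finset.prod_eq_multiset_prod,
    Multiset.toFinset_val, hnodup.dedup, aroots_def]

theorem ncard_image_pow_card_eq_card_squarefreeMonicOfDegree (n : ℕ) :
    {S : Finset K | S.card = n ∧ S.image (fun x => x ^ Fintype.card F) = S}.ncard =
      Nat.card (squarefreeMonicOfDegree F n) := by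
  let Φ : squarefreeMonicOfDegree F n →
      {S : Finset K | S.card = n ∧ S.image (fun x => x ^ Fintype.card F) = S} :=
    fun f => ⟨(f.1.aroots K).toFinset, by
      simpa [f.2.1.natDegree_map, f.2.2.1] using
        (congrArg natDegree (map_eq_prod_aroots (K := K) f.2.1 f.2.2.2)).symm,
      image_pow_card_aroots f.1⟩
  have hΦ : Function.Bijective Φ := by
    constructor
    · intro f g hfg
      refine Subtype.ext (map_injective _ (algebraMap F K).injective ?_)
      rw [map_eq_prod_aroots f.2.1 f.2.2.2, map_eq_prod_aroots g.2.1 g.2.2.2]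
      exact congrArg (fun S : Finset K => ∏ x ∈ S, (X - C x)) (congrArg Subtype.val hfg)
    · rintro ⟨S, hcard, hS⟩
      obtain ⟨f, hf, hfS⟩ := exists_monic_map_eq_prod_X_sub_C hS
      have hsep : f.Separable := by
        rw [← separable_map (algebraMap F K), hfS]
        exact separable_prod_X_sub_C_iff'.mpr fun _ _ _ _ h => h
      refine ⟨⟨f, hf, ?_, hsep.squarefree⟩, Subtype.ext ?_⟩
      · rw [← hf.natDegree_map (algebraMap F K), hfS, natDegree_finsetProd_X_sub_C_eq_card, hcard]
      · simp only [Φ, aroots_def, hfS, roots_prod_X_sub_C, Finset.val_toFinset]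
  rw [← Nat.card_coe_set_eq]
  exact (Nat.card_congr (Equiv.ofBijective Φ hΦ)).symm

end FiniteField

theorem stmt5_general (q : ℕ)
    (F K : Type*) [Field F] [Fintype F] (hF : Fintype.card F = q)
    [Field K] [DecidableEq K] [Algebra F K] [IsAlgClosure F K] (n : ℕ) :
    (2 ≤ n →
      ({S : Finset K | S.card = n ∧ S.image (fun x => x ^ q) = S}.ncard : ℤ)
        = (q : ℤ) ^ n - (q : ℤ) ^ (n - 1))
    ∧ (n = 1 →
      ({S : Finset K | S.card = n ∧ S.image (fun x => x ^ q) = S}.ncard : ℤ) = q) := by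
  subst hF
  have := IsAlgClosure.isAlgClosed F (K := K)
  rw [FiniteField.ncard_image_pow_card_eq_card_squarefreeMonicOfDegree]
  refine ⟨fun hn => ?_, fun hn => ?_⟩
  · obtain ⟨m, rfl⟩ : ∃ m, n = m + 2 := ⟨n - 2, by omega⟩
    have h := congrArg (Nat.cast : ℕ → ℤ) (card_squarefreeMonicOfDegree_add_two F m)
    push_cast at h
    rw [show m + 2 - 1 = m + 1 by omega]
    linarith
  · subst hn
    rw [card_squarefreeMonicOfDegree_one]

/-- Let `q` be a power of an odd prime `p`, `𝔽_q` the field with `q`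
elements, `K` an algebraic closure and `σ(x) = x^q` the Frobenius. For every integer
`n ≥ 2` the number of `n`-element subsets `S ⊆ K` with `σ(S) = S` equals `q^n − q^{n−1}`;
for `n = 1` it equals `q`. -/
theorem stmt5 (p e q : ℕ) (hp : p.Prime) (hodd : Odd p) (he : 0 < e) (hq : q = p ^ e)
    (F K : Type*) [Field F] [Fintype F] (hF : Fintype.card F = q)
    [Field K] [DecidableEq K] [Algebra F K] [IsAlgClosure F K] (n : ℕ) :
    (2 ≤ n →
      ({S : Finset K | S.card = n ∧ S.image (fun x => x ^ q) = S}.ncard : ℤ)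
        = (q : ℤ) ^ n - (q : ℤ) ^ (n - 1))
    ∧ (n = 1 →
      ({S : Finset K | S.card = n ∧ S.image (fun x => x ^ q) = S}.ncard : ℤ) = q) :=
  stmt5_general q F K hF n
end

section
/- Let q be a power of an odd prime p, let 𝔽_q be the finite field with q elements, let K be an algebraic closure of 𝔽_q, and let σ : K → K be the Frobenius map σ(x) = x^q. For every positive integer n, the number a of n-element subsets S ⊆ K \ {0} with σ(S) = S satisfies (q+1) · a = (q−1) · (q^n − (−1)^n). -/
/-!
Let `q = #F`. A multiset of nonzero elements of `K` stable under `σ = (· ^ q)` is the multiset of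
roots of a unique monic polynomial over `F` with nonzero constant term, so there are
`m₀ = 1`, `mₖ = (q - 1) q ^ (k - 1)` of size `k`. Splitting a stable multiset as `S + 2 • M`, where
the stable set `S` collects the elements of odd multiplicity, gives `mₙ = ∑ₖ aₙ₋₂ₖ mₖ` for the
numbers `aⱼ` of stable sets. Peeling off `k = 0` and using `mₖ₊₁ = q mₖ` (`k ≥ 1`) turns this
into `aₙ₊₂ = aₙ + mₙ₊₂ - q mₙ`, which the closed form satisfies.
-/

open Finset Polynomial

section Multiset

variable {α : Type*} [DecidableEq α]

theorem Multiset.map_eq_self_iff_count_apply (σ : Equiv.Perm α) {T : Multiset α} :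
    T.map σ = T ↔ ∀ x, T.count (σ x) = T.count x := by
  rw [Multiset.ext, σ.surjective.forall]
  simp_rw [Multiset.count_map_eq_count' _ _ σ.injective]
  exact forall_congr' fun _ => eq_comm

theorem Finset.image_eq_self_iff_val_map {σ : α → α} (hσ : σ.Injective) {S : Finset α} :
    S.image σ = S ↔ S.val.map σ = S.val := by
  rw [← Finset.val_inj, Finset.image_val_of_injOn hσ.injOn]

theorem Finset.val_add_two_nsmul_injective :
    (fun p : Finset α × Multiset α => p.1.val + 2 • p.2).Injective := by
  rintro ⟨S, M⟩ ⟨S', M'⟩ h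
  have hcount (x : α) := congrArg (Multiset.count x) h
  have hS := Multiset.nodup_iff_count_le_one.mp S.nodup
  have hS' := Multiset.nodup_iff_count_le_one.mp S'.nodup
  simp only [Multiset.count_add, Multiset.count_nsmul] at hcount
  refine Prod.ext (Finset.val_injective (Multiset.ext.mpr fun x => ?_))
    (Multiset.ext.mpr fun x => ?_)
  all_goals dsimp only; have := hcount x; have := hS x; have := hS' x; omega

theorem Multiset.exists_count_mod_two_count_div_two (T : Multiset α) :
    ∃ (S : Finset α) (M : Multiset α),
      (∀ x, S.val.count x = T.count x % 2) ∧ ∀ x, M.count x = T.count x / 2 := by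
  let parity := Finsupp.toMultiset (T.toFinsupp.mapRange (· % 2) (Nat.zero_mod 2))
  have hparity (x : α) : parity.count x = T.count x % 2 := by simp [parity]
  refine ⟨⟨parity, Multiset.nodup_iff_count_le_one.mpr fun x => ?_⟩,
    Finsupp.toMultiset (T.toFinsupp.mapRange (· / 2) (Nat.zero_div 2)), hparity, fun x => ?_⟩
  · rw [hparity]
    omega
  · simp

end Multiset

section Stable

variable {α : Type*} [Zero α]

def stableMultisets (σ : α → α) (n : ℕ) : Set (Multiset α) :=
  {T | Multiset.card T = n ∧ (0 : α) ∉ T ∧ T.map σ = T}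

theorem stableMultisets_zero (σ : α → α) : stableMultisets σ 0 = {0} := by
  ext T
  constructor
  · rintro ⟨hT, -⟩
    exact Multiset.card_eq_zero.mp hT
  · rintro rfl
    simp [stableMultisets]

variable [DecidableEq α]

def stableFinsets (σ : α → α) (n : ℕ) : Set (Finset α) :=
  {S | S.card = n ∧ (0 : α) ∉ S ∧ S.image σ = S}

theorem stableFinsets_finite {σ : α → α} (hσ : σ.Injective) {n : ℕ}
    (hfin : (stableMultisets σ n).Finite) : (stableFinsets σ n).Finite :=
  (hfin.preimage Finset.val_injective.injOn).subset fun _ ⟨hcard, h0, hS⟩ =>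
    ⟨hcard, h0, (Finset.image_eq_self_iff_val_map hσ).mp hS⟩

theorem bijOn_stableMultisets (σ : Equiv.Perm α) (n : ℕ) :
    Set.BijOn (fun p : Finset α × Multiset α => p.1.val + 2 • p.2)
      (⋃ k ∈ range (n / 2 + 1), stableFinsets σ (n - 2 * k) ×ˢ stableMultisets σ k)
      (stableMultisets σ n) := by
  refine ⟨?_, Finset.val_add_two_nsmul_injective.injOn, ?_⟩
  · simp only [Set.MapsTo, Set.mem_iUnion, Finset.mem_range, Set.mem_prod, Prod.forall]
    rintro S M ⟨k, hk, ⟨hS, h0S, hσS⟩, hM, h0M, hσM⟩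
    rw [Finset.image_eq_self_iff_val_map σ.injective] at hσS
    refine ⟨?_, by simp [h0S, h0M], by rw [Multiset.map_add, Multiset.map_nsmul, hσS, hσM]⟩
    simp only [Multiset.card_add, Multiset.card_nsmul, Finset.card_val, hS, hM]
    omega
  · rintro T ⟨hT, h0T, hσT⟩
    obtain ⟨S, M, hS, hM⟩ := T.exists_count_mod_two_count_div_two
    have hSM : S.val + 2 • M = T := Multiset.ext.mpr fun x => by
      rw [Multiset.count_add, Multiset.count_nsmul, hS, hM]
      omega
    have hcard : S.card + 2 * Multiset.card M = n := by
      rw [← hT, ← hSM, Multiset.card_add, Multiset.card_nsmul, Finset.card_val]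
    have h0 : T.count 0 = 0 := Multiset.count_eq_zero.mpr h0T
    rw [Multiset.map_eq_self_iff_count_apply] at hσT
    refine ⟨(S, M), ?_, hSM⟩
    simp only [Set.mem_iUnion, Finset.mem_range, Set.mem_prod]
    refine ⟨Multiset.card M, by omega, ⟨by omega, ?_, ?_⟩, rfl, ?_, ?_⟩
    · rw [← Finset.mem_val, ← Multiset.count_eq_zero, hS, h0]
    · rw [Finset.image_eq_self_iff_val_map σ.injective, Multiset.map_eq_self_iff_count_apply]
      simp [hS, hσT]
    · rw [← Multiset.count_eq_zero, hM, h0]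
    · rw [Multiset.map_eq_self_iff_count_apply]
      simp [hM, hσT]

theorem ncard_stableMultisets_eq_sum (σ : Equiv.Perm α)
    (hfin : ∀ k, (stableMultisets σ k).Finite) (n : ℕ) :
    (stableMultisets σ n).ncard = ∑ k ∈ range (n / 2 + 1),
      (stableFinsets σ (n - 2 * k)).ncard * (stableMultisets σ k).ncard := by
  rw [← (bijOn_stableMultisets σ n).image_eq,
    Set.ncard_image_of_injective _ Finset.val_add_two_nsmul_injective, ← Finset.set_biUnion_coe,
    Set.Finite.ncard_biUnion (Finset.finite_toSet _)
      (fun k _ => (stableFinsets_finite σ.injective (hfin _)).prod (hfin k)),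
    finsum_mem_coe_finset]
  · simp only [Set.ncard_prod]
  · exact fun k _ l _ hkl => Set.disjoint_left.mpr fun p hk hl => hkl (hk.2.1.symm.trans hl.2.1)

end Stable

theorem eq_closed_form_of_convolution {R : Type*} [CommRing R] {q : R} {a m : ℕ → R}
    (hm_zero : m 0 = 1) (hm_succ : ∀ k, m (k + 1) = (q - 1) * q ^ k)
    (hconv : ∀ n, m n = ∑ k ∈ range (n / 2 + 1), a (n - 2 * k) * m k) {n : ℕ} (hn : 0 < n) :
    (q + 1) * a n = (q - 1) * (q ^ n - (-1) ^ n) := by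
  have hm_succ' : ∀ k, m (k + 1) = q * m k - if k = 0 then 1 else 0 := by
    rintro (_ | k)
    · simp [hm_succ, hm_zero]
    · simp only [hm_succ, Nat.add_one_ne_zero, if_false, sub_zero]
      ring
  have hrec : ∀ N, a (N + 2) = a N + m (N + 2) - q * m N := by
    intro N
    have h := hconv (N + 2)
    rw [show (N + 2) / 2 + 1 = N / 2 + 1 + 1 by omega, sum_range_succ'] at h
    have hsum : ∑ k ∈ range (N / 2 + 1), a (N + 2 - 2 * (k + 1)) * m (k + 1)
        = q * m N - a N := by
      simp_rw [show ∀ k, N + 2 - 2 * (k + 1) = N - 2 * k by omega, hm_succ', mul_sub,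
        mul_ite, mul_one, mul_zero, sum_sub_distrib, sum_ite_eq', hconv N, mul_sum]
      simp [mul_left_comm]
    rw [hsum, hm_zero, mul_zero, Nat.sub_zero, mul_one] at h
    linear_combination -h
  have ha_zero : a 0 = 1 := by simpa [hm_zero] using (hconv 0).symm
  have ha_one : a 1 = q - 1 := by simpa [hm_zero, hm_succ] using (hconv 1).symm
  obtain ⟨n, rfl⟩ : ∃ k, n = k + 1 := ⟨n - 1, by omega⟩
  clear hn
  induction n using Nat.twoStepInduction with
  | zero => rw [ha_one]; ring
  | one => rw [hrec, ha_zero, hm_succ, hm_zero]; ring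
  | more n ih _ =>
    rw [hrec, hm_succ, hm_succ]
    linear_combination ih

theorem card_fin_succ_fun_apply_zero_ne_zero {R : Type*} [Zero R] [Fintype R] [DecidableEq R]
    (m : ℕ) :
    Fintype.card {v : Fin (m + 1) → R // v 0 ≠ 0} = (Fintype.card R - 1) * Fintype.card R ^ m :=
  calc _ = Fintype.card {x : R × (Fin m → R) // x.1 ≠ 0} :=
        Fintype.card_congr ((Fin.consEquiv fun _ => R).subtypeEquiv fun _ => Iff.rfl).symm
    _ = Fintype.card ({a : R // a ≠ 0} × (Fin m → R)) :=
        Fintype.card_congr (Equiv.prodSubtypeFstEquivSubtypeProd (β := Fin m → R) (p := (· ≠ 0)))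
    _ = _ := by simp [Fintype.card_subtype_compl]

theorem ncard_monic_natDegree_coeff_zero_ne_zero {R : Type*} [Semiring R] [Fintype R]
    [Nontrivial R] {n : ℕ} (hn : 0 < n) :
    {f : R[X] | f.Monic ∧ f.natDegree = n ∧ f.coeff 0 ≠ 0}.ncard
      = (Fintype.card R - 1) * Fintype.card R ^ (n - 1) := by
  classical
  obtain ⟨m, rfl⟩ : ∃ m, n = m + 1 := ⟨n - 1, by omega⟩
  let e := (monicEquivDegreeLT (R := R) (m + 1)).trans (degreeLTEquiv R (m + 1)).toEquiv
  calc _ = Nat.card {f : {f : R[X] // f.Monic ∧ f.natDegree = m + 1} // f.1.coeff 0 ≠ 0} :=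
        Nat.card_congr ((Equiv.subtypeSubtypeEquivSubtypeInter (fun f : R[X] => _) _).trans
          (Equiv.subtypeEquivRight fun _ => and_assoc)).symm
    _ = Nat.card {v : Fin (m + 1) → R // v 0 ≠ 0} := Nat.card_congr <| e.subtypeEquiv fun f => by
        simp [e, monicEquivDegreeLT, degreeLTEquiv, eraseLead_coeff_of_ne, f.2.2]
    _ = _ := by rw [Nat.card_eq_fintype_card, card_fin_succ_fun_apply_zero_ne_zero]; rfl

section FiniteField

variable {F K : Type*} [Field F] [Field K] [Algebra F K]

theorem zero_mem_roots_map_iff {f : F[X]} (hf : f ≠ 0) :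
    (0 : K) ∈ (f.map (algebraMap F K)).roots ↔ f.coeff 0 = 0 := by
  rw [mem_roots_map_of_injective (algebraMap F K).injective hf, eval₂_at_zero, map_eq_zero]

variable [Fintype F]

theorem mem_range_algebraMap_of_pow_card_eq_self {x : K} (hx : x ^ Fintype.card F = x) :
    x ∈ Set.range (algebraMap F K) := by
  have hq : 1 < Fintype.card F := Fintype.one_lt_card
  have hsplit : Splits (X ^ Fintype.card F - X : F[X]) := by
    rw [splits_iff_card_roots, FiniteField.roots_X_pow_card_sub_X,
      FiniteField.X_pow_card_sub_X_natDegree_eq F hq]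
    rfl
  have hroot : x ∈ (map (algebraMap F K) (X ^ Fintype.card F - X)).roots := by
    simp [hx, FiniteField.X_pow_card_sub_X_ne_zero K hq]
  rw [hsplit.roots_map, FiniteField.roots_X_pow_card_sub_X] at hroot
  simpa using hroot

theorem prod_X_sub_C_mem_lifts_of_map_pow_card {T : Multiset K}
    (hT : T.map (· ^ Fintype.card F) = T) :
    (T.map fun a => X - C a).prod ∈ lifts (algebraMap F K) := by
  set φ := (FiniteField.frobeniusAlgHom F K).toRingHom
  have hφ : (T.map fun a => X - C a).prod.map φ = (T.map fun a => X - C a).prod := by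
    conv_rhs => rw [← hT]
    simp [Polynomial.map_multiset_prod, Multiset.map_map, φ]
  refine lifts_iff_coeff_lifts _ |>.mpr fun i => mem_range_algebraMap_of_pow_card_eq_self ?_
  conv_rhs => rw [← hφ, coeff_map]
  rfl

variable [IsAlgClosed K]

theorem map_pow_card_roots_map (f : F[X]) :
    (f.map (algebraMap F K)).roots.map (· ^ Fintype.card F) = (f.map (algebraMap F K)).roots := by
  have := (IsAlgClosed.splits (f.map (algebraMap F K))).roots_map
    (FiniteField.frobeniusAlgHom F K).toRingHom
  rw [Polynomial.map_map] at this
  simpa using this.symm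

theorem bijOn_roots_map_stableMultisets (n : ℕ) :
    Set.BijOn (fun f : F[X] => (f.map (algebraMap F K)).roots)
      {f | f.Monic ∧ f.natDegree = n ∧ f.coeff 0 ≠ 0}
      (stableMultisets (· ^ Fintype.card F) n) := by
  refine ⟨?_, ?_, ?_⟩
  · rintro f ⟨hm, rfl, hc⟩
    refine ⟨?_, ?_, map_pow_card_roots_map f⟩
    · exact (splits_iff_card_roots.mp (IsAlgClosed.splits _)).trans (natDegree_map _)
    · rwa [zero_mem_roots_map_iff hm.ne_zero]
  · rintro f ⟨hf, -⟩ g ⟨hg, -⟩ h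
    refine map_injective _ (algebraMap F K).injective ?_
    rw [(IsAlgClosed.splits _).eq_prod_roots_of_monic (hf.map _),
      (IsAlgClosed.splits _).eq_prod_roots_of_monic (hg.map _)]
    simp only at h
    rw [h]
  · rintro T ⟨rfl, h0, hT⟩
    obtain ⟨f, hfP, hdeg, hm⟩ := lifts_and_natDegree_eq_and_monic
      (prod_X_sub_C_mem_lifts_of_map_pow_card hT)
      (monic_multiset_prod_of_monic _ _ fun a _ => monic_X_sub_C a)
    have hroots : (f.map (algebraMap F K)).roots = T := by
      rw [hfP, roots_multiset_prod_X_sub_C]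
    refine ⟨f, ⟨hm, ?_, ?_⟩, hroots⟩
    · rw [hdeg, natDegree_multiset_prod_X_sub_C_eq_card]
    · rwa [ne_eq, ← zero_mem_roots_map_iff (K := K) hm.ne_zero, hroots]

theorem ncard_stableMultisets_pow_card {n : ℕ} (hn : 0 < n) :
    (stableMultisets (· ^ Fintype.card F : K → K) n).ncard
      = (Fintype.card F - 1) * Fintype.card F ^ (n - 1) := by
  rw [← (bijOn_roots_map_stableMultisets n).image_eq,
    (bijOn_roots_map_stableMultisets n).injOn.ncard_image,
    ncard_monic_natDegree_coeff_zero_ne_zero hn]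

theorem stableMultisets_pow_card_finite (n : ℕ) :
    (stableMultisets (· ^ Fintype.card F : K → K) n).Finite := by
  rcases n.eq_zero_or_pos with rfl | hn
  · simp [stableMultisets_zero]
  · refine Set.finite_of_ncard_pos ?_
    rw [ncard_stableMultisets_pow_card hn]
    have : 1 < Fintype.card F := Fintype.one_lt_card
    exact Nat.mul_pos (by omega) (by positivity)

end FiniteField

theorem stmt7_general (q : ℕ)
    (F K : Type*) [Field F] [Fintype F] (hF : Fintype.card F = q)
    [Field K] [DecidableEq K] [Algebra F K] [IsAlgClosure F K] (n : ℕ) (hn : 0 < n) :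
    ((q : ℤ) + 1) *
        ({S : Finset K | S.card = n ∧ (0 : K) ∉ S ∧
            S.image (fun x => x ^ q) = S}.ncard : ℤ)
      = ((q : ℤ) - 1) * ((q : ℤ) ^ n - (-1 : ℤ) ^ n) := by
  subst hF
  have := IsAlgClosure.isAlgClosed F (K := K)
  let σ : Equiv.Perm K := (FiniteField.frobeniusAlgEquivOfAlgebraic F K).toEquiv
  have hq : 1 ≤ Fintype.card F := Fintype.card_pos
  refine eq_closed_form_of_convolution (a := fun k => ((stableFinsets σ k).ncard : ℤ))
    (m := fun k => ((stableMultisets σ k).ncard : ℤ)) ?_ (fun k => ?_) (fun k => ?_) hn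
  · simp [stableMultisets_zero]
  · simp [σ, FiniteField.coe_frobeniusAlgEquivOfAlgebraic,
      ncard_stableMultisets_pow_card (Nat.succ_pos k), hq]
  · exact_mod_cast ncard_stableMultisets_eq_sum σ stableMultisets_pow_card_finite k

/-- Let `q` be a power of an odd prime `p`, `𝔽_q` the field with `q`
elements, `K` an algebraic closure and `σ(x) = x^q` the Frobenius. For every positive
integer `n`, the number `a` of `n`-element subsets `S ⊆ K \ {0}` with `σ(S) = S`
satisfies `(q+1)·a = (q−1)·(q^n − (−1)^n)`. -/
theorem stmt7 (p e q : ℕ) (hp : p.Prime) (hodd : Odd p) (he : 0 < e) (hq : q = p ^ e)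
    (F K : Type*) [Field F] [Fintype F] (hF : Fintype.card F = q)
    [Field K] [DecidableEq K] [Algebra F K] [IsAlgClosure F K] (n : ℕ) (hn : 0 < n) :
    ((q : ℤ) + 1) *
        ({S : Finset K | S.card = n ∧ (0 : K) ∉ S ∧
            S.image (fun x => x ^ q) = S}.ncard : ℤ)
      = ((q : ℤ) - 1) * ((q : ℤ) ^ n - (-1 : ℤ) ^ n) :=
  stmt7_general q F K hF n hn
end
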